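/- Let L > 0, α > 0, and let u : ℝ³ → ℝ³ be a smooth periodic vector field with ∇·u = 0, and set v = u − α²Δu. Then ∫_Ω ((u·∇)v)·u dx − α² Σ_{j=1}^{3} ∫_Ω ((∂_{x_j}u·∇)∂_{x_j}u)·u dx = 0, where Ω = [0,2πL]³. -/

import Mathlib

open MeasureTheory Real

noncomputable section

abbrev V3 : Type := Fin 3 → ℝ

/-- The periodic box `Ω = [0, 2πL]³`. -/
def box (L : ℝ) : Set V3 := Set.Icc 0 (fun _ => 2 * Real.pi * L)

/-- Partial derivative in the `i`-th coordinate direction. -/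
def pd {E : Type*} [NormedAddCommGroup E] [NormedSpace ℝ E]
    (i : Fin 3) (f : V3 → E) (x : V3) : E :=
  fderiv ℝ f x (Pi.single i 1)

/-- Componentwise Laplacian. -/
def lap {E : Type*} [NormedAddCommGroup E] [NormedSpace ℝ E]
    (f : V3 → E) (x : V3) : E :=
  ∑ j : Fin 3, pd j (fun y => pd j f y) x

/-- `2πL`-periodicity in each coordinate. -/
def IsPeriodic {E : Type*} (L : ℝ) (f : V3 → E) : Prop :=
  ∀ (x : V3) (i : Fin 3), f (x + (2 * Real.pi * L) • (Pi.single i (1 : ℝ) : V3)) = f x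

/-- Divergence-free vector field. -/
def DivFree (u : V3 → V3) : Prop := ∀ x, ∑ i : Fin 3, pd i u x i = 0

/-- `(w·∇)z`, with `i`-th component `Σⱼ wⱼ ∂ⱼzᵢ`. -/
def advect (w z : V3 → V3) (x : V3) : V3 :=
  fun i => ∑ j : Fin 3, w x j * pd j z x i

/-- Square of the `L²(Ω)` norm, `|u|²`. -/
def normL2sq (L : ℝ) (u : V3 → V3) : ℝ := ∫ x in box L, ∑ i, (u x i) ^ 2

/-- Square of the `L²(Ω)` norm of the gradient, `|∇u|²`. -/
def gradNormSq (L : ℝ) (u : V3 → V3) : ℝ :=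
  ∫ x in box L, ∑ i, ∑ j, (pd j u x i) ^ 2

/-- The Helmholtz operator `H u = u - α² Δu`. -/
def Hop (α : ℝ) (u : V3 → V3) : V3 → V3 :=
  fun x i => u x i - α ^ 2 * lap u x i


section toolkit
variable {E : Type*} [NormedAddCommGroup E] [NormedSpace ℝ E]

lemma contDiff_pd {f : V3 → E} (hf : ContDiff ℝ (⊤ : ℕ∞) f) (j : Fin 3) : ContDiff ℝ (⊤ : ℕ∞) (pd j f) :=
  (hf.fderiv_right (by simp)).clm_apply contDiff_const

lemma pd_periodic {L : ℝ} {f : V3 → E} (hf : ContDiff ℝ (⊤ : ℕ∞) f) (hp : IsPeriodic L f)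
    (j : Fin 3) : IsPeriodic L (pd j f) := by
  intro x i
  set v : V3 := (2 * Real.pi * L) • (Pi.single i (1:ℝ) : V3) with hv
  have hD : HasFDerivAt f (fderiv ℝ f (x + v)) (x + v) :=
    (hf.differentiable (by simp) (x + v)).hasFDerivAt
  have hcomp : HasFDerivAt (fun y => f (y + v)) (fderiv ℝ f (x + v)) x := by
    have h1 : HasFDerivAt (fun y : V3 => y + v) (ContinuousLinearMap.id ℝ V3) x :=
      (hasFDerivAt_id x).add_const v
    exact hD.comp x h1
  have heq : (fun y => f (y + v)) = f := funext fun y => hp y i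
  rw [heq] at hcomp
  show fderiv ℝ f (x + v) (Pi.single j 1) = fderiv ℝ f x (Pi.single j 1)
  rw [hcomp.fderiv]

lemma pd_proj {F : V3 → V3} {x : V3} (hF : DifferentiableAt ℝ F x) (j i : Fin 3) :
    pd j (fun y => F y i) x = pd j F x i := by
  have h : HasFDerivAt (fun y => F y i)
      ((ContinuousLinearMap.proj (R := ℝ) (φ := fun _ : Fin 3 => ℝ) i).comp (fderiv ℝ F x)) x :=
    ((ContinuousLinearMap.proj (R := ℝ) (φ := fun _ : Fin 3 => ℝ) i).hasFDerivAt).comp x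
      hF.hasFDerivAt
  show fderiv ℝ (fun y => F y i) x (Pi.single j 1) = _
  rw [h.fderiv]; rfl

lemma pd_comm {f : V3 → E} (hf : ContDiff ℝ (⊤ : ℕ∞) f) (k j : Fin 3) (x : V3) :
    pd k (pd j f) x = pd j (pd k f) x := by
  have hd1 : ∀ y, HasFDerivAt f (fderiv ℝ f y) y := fun y =>
    (hf.differentiable (by simp) y).hasFDerivAt
  have hd2 : HasFDerivAt (fderiv ℝ f) (fderiv ℝ (fderiv ℝ f) x) x :=
    ((hf.fderiv_right (m := (⊤ : ℕ∞)) (by simp)).differentiable (by simp) x).hasFDerivAt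
  have hsym := second_derivative_symmetric hd1 hd2
  have key : ∀ a b : Fin 3,
      pd a (pd b f) x = fderiv ℝ (fderiv ℝ f) x (Pi.single a 1) (Pi.single b 1) := by
    intro a b
    show fderiv ℝ (fun y => fderiv ℝ f y (Pi.single b 1)) x (Pi.single a 1) = _
    rw [fderiv_clm_apply ((hf.fderiv_right (m := (⊤ : ℕ∞)) (by simp)).differentiable (by simp) x)
      (differentiableAt_const _)]
    simp
  rw [key, key, hsym]

lemma pd_add {f g : V3 → ℝ} {x : V3} (hf : DifferentiableAt ℝ f x)
    (hg : DifferentiableAt ℝ g x) (j : Fin 3) :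
    pd j (fun y => f y + g y) x = pd j f x + pd j g x := by
  show fderiv ℝ _ x _ = _
  rw [fderiv_fun_add hf hg]; rfl

lemma pd_sub {f g : V3 → ℝ} {x : V3} (hf : DifferentiableAt ℝ f x)
    (hg : DifferentiableAt ℝ g x) (j : Fin 3) :
    pd j (fun y => f y - g y) x = pd j f x - pd j g x := by
  show fderiv ℝ _ x _ = _
  rw [fderiv_fun_sub hf hg]; rfl

lemma pd_const_mul {g : V3 → ℝ} {x : V3} (hg : DifferentiableAt ℝ g x) (c : ℝ) (j : Fin 3) :
    pd j (fun y => c * g y) x = c * pd j g x := by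
  show fderiv ℝ _ x _ = _
  rw [fderiv_const_mul hg c]; rfl

lemma pd_mul {f g : V3 → ℝ} {x : V3} (hf : DifferentiableAt ℝ f x)
    (hg : DifferentiableAt ℝ g x) (j : Fin 3) :
    pd j (fun y => f y * g y) x = pd j f x * g x + f x * pd j g x := by
  show fderiv ℝ _ x _ = _
  rw [fderiv_fun_mul hf hg]
  show f x * fderiv ℝ g x (Pi.single j 1) + g x * fderiv ℝ f x (Pi.single j 1) = _
  unfold pd; ring

lemma pd_finsum {ι : Type*} {s : Finset ι} {f : ι → V3 → ℝ} {x : V3}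
    (hf : ∀ i ∈ s, DifferentiableAt ℝ (f i) x) (j : Fin 3) :
    pd j (fun y => ∑ i ∈ s, f i y) x = ∑ i ∈ s, pd j (f i) x := by
  show fderiv ℝ _ x _ = _
  rw [fderiv_fun_sum hf]
  simp [pd]

end toolkit

lemma insertNth_top (j : Fin 3) (c : ℝ) (y : Fin 2 → ℝ) :
    j.insertNth c y = j.insertNth 0 y + c • (Pi.single j (1:ℝ) : V3) := by
  funext k
  rcases eq_or_ne k j with rfl | hk
  · simp
  · rcases Fin.exists_succAbove_eq hk with ⟨m, rfl⟩
    simp [Pi.single_eq_of_ne (Fin.succAbove_ne j m)]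

lemma integral_pd_zero {L : ℝ} (hL : 0 < L) {g : V3 → ℝ} (hg : ContDiff ℝ (⊤ : ℕ∞) g)
    (hp : IsPeriodic L g) (j : Fin 3) : ∫ x in box L, pd j g x = 0 := by
  have hle : (0 : V3) ≤ fun _ => 2 * π * L := by
    intro i; have := Real.pi_pos; positivity
  set f : V3 → Fin 3 → ℝ := fun x i => if i = j then g x else 0 with hf
  set f' : V3 → V3 →L[ℝ] (Fin 3 → ℝ) := fun x =>
    ContinuousLinearMap.pi (fun i => if i = j then fderiv ℝ g x else 0) with hf'
  have Hd : ∀ x, HasFDerivAt f (f' x) x := by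
    intro x
    apply hasFDerivAt_pi.2
    intro i
    rcases eq_or_ne i j with rfl | h
    · simpa using (hg.differentiable (by simp) x).hasFDerivAt
    · simpa [h] using hasFDerivAt_const (0:ℝ) x
  have hdiv : ∀ x : V3, (∑ i, f' x (Pi.single i (1:ℝ)) i) = pd j g x := by
    intro x
    rw [Finset.sum_eq_single j]
    · simp [hf', pd]
    · intro b _ hb; simp [hf', hb]
    · simp
  have hcont : Continuous (pd j g) := (contDiff_pd hg j).continuous
  have Hi : IntegrableOn (fun x => ∑ i, f' x (Pi.single i (1:ℝ)) i)
      (Set.Icc (0:V3) (fun _ => 2 * π * L)) := by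
    rw [funext hdiv]
    exact hcont.continuousOn.integrableOn_compact isCompact_Icc
  have Hc : ContinuousOn f (Set.Icc (0:V3) fun _ => 2 * π * L) := by
    refine Continuous.continuousOn (continuous_pi fun i => ?_)
    simp only [hf]
    rcases eq_or_ne i j with rfl | h
    · simp only [if_pos rfl]; exact hg.continuous
    · simp only [if_neg h]; exact continuous_const
  have key := integral_divergence_of_hasFDerivAt_off_countable
    (0 : V3) (fun _ => 2 * π * L) hle f f' ∅ Set.countable_empty
    Hc (fun x _ => Hd x) Hi
  rw [funext hdiv] at key
  rw [show box L = Set.Icc (0:V3) (fun _ => 2 * π * L) from rfl, key]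
  apply Finset.sum_eq_zero
  intro i _
  rcases eq_or_ne i j with rfl | h
  · have : ∀ y : Fin 2 → ℝ, f (i.insertNth ((fun _ => 2*π*L : V3) i) y) i
        = f (i.insertNth ((0:V3) i) y) i := by
      intro y
      simp only [hf, if_pos rfl]
      show g (i.insertNth (2*π*L) y) = g (i.insertNth ((0:V3) i) y)
      have h0 : ((0:V3) i) = 0 := rfl
      rw [h0, insertNth_top i (2*π*L) y]
      exact hp _ i
    simp only [this]
    ring
  · simp [hf, h]

lemma key_alg (α : ℝ) (a : Fin 3 → ℝ) (b : Fin 3 → Fin 3 → ℝ)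
    (c e : Fin 3 → Fin 3 → Fin 3 → ℝ)
    (hb : b 0 0 + b 1 1 + b 2 2 = 0)
    (hc10 : ∀ i, c 1 0 i = c 0 1 i)
    (hc20 : ∀ i, c 2 0 i = c 0 2 i)
    (hc21 : ∀ i, c 2 1 i = c 1 2 i) :
    (∑ i, (∑ j, a j * (b j i - α ^ 2 * ∑ m, e m j i)) * a i)
      - α ^ 2 * ∑ j, ∑ i, (∑ k, b j k * c k j i) * a i
    = ∑ m, ((b m m * ((1/2) * ∑ i, a i * a i)
          + a m * ((1/2) * ∑ i, (b m i * a i + a i * b m i)))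
        + α ^ 2 * (b m m * ((1/2) * ∑ i, ∑ k, b k i * b k i)
          + a m * ((1/2) * ∑ i, ∑ k, (c m k i * b k i + b k i * c m k i)))
        - α ^ 2 * ∑ j, ∑ i, (b m j * (a i * c m j i)
          + a j * (b m i * c m j i + a i * e m j i))) := by
  simp only [Fin.sum_univ_three, hc10, hc20, hc21]
  linear_combination (-(a 0 * a 0 + a 1 * a 1 + a 2 * a 2) / 2
    - α ^ 2 * (b 0 0 * b 0 0 + b 0 1 * b 0 1 + b 0 2 * b 0 2
      + b 1 0 * b 1 0 + b 1 1 * b 1 1 + b 1 2 * b 1 2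
      + b 2 0 * b 2 0 + b 2 1 * b 2 1 + b 2 2 * b 2 2) / 2) * hb

section defs
variable (u : V3 → V3) (α : ℝ)

def co (i : Fin 3) : V3 → ℝ := fun y => u y i
def Bf (j i : Fin 3) : V3 → ℝ := pd j (co u i)
def Cf (k j i : Fin 3) : V3 → ℝ := pd k (Bf u j i)
def Ef (m j i : Fin 3) : V3 → ℝ := pd m (Cf u m j i)
def Qf : V3 → ℝ := fun y => (1/2) * ∑ i, co u i y * co u i y
def Rf : V3 → ℝ := fun y => (1/2) * ∑ i, ∑ k, Bf u k i y * Bf u k i y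
def Sf (m : Fin 3) : V3 → ℝ := fun y => ∑ j, ∑ i, co u j y * (co u i y * Cf u m j i y)
def Gf (m : Fin 3) : V3 → ℝ :=
  fun y => co u m y * Qf u y + α ^ 2 * (co u m y * Rf u y) - α ^ 2 * Sf u m y

end defs

section facts
variable {u : V3 → V3} {α L : ℝ}

lemma co_smooth (hu : ContDiff ℝ (⊤ : ℕ∞) u) (i : Fin 3) : ContDiff ℝ (⊤ : ℕ∞) (co u i) :=
  (ContinuousLinearMap.proj (R := ℝ) (φ := fun _ : Fin 3 => ℝ) i).contDiff.comp hu

lemma Bf_smooth (hu : ContDiff ℝ (⊤ : ℕ∞) u) (j i : Fin 3) : ContDiff ℝ (⊤ : ℕ∞) (Bf u j i) := contDiff_pd (co_smooth hu i) j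
lemma Cf_smooth (hu : ContDiff ℝ (⊤ : ℕ∞) u) (k j i : Fin 3) : ContDiff ℝ (⊤ : ℕ∞) (Cf u k j i) :=
  contDiff_pd (Bf_smooth hu j i) k
lemma Ef_smooth (hu : ContDiff ℝ (⊤ : ℕ∞) u) (m j i : Fin 3) : ContDiff ℝ (⊤ : ℕ∞) (Ef u m j i) :=
  contDiff_pd (Cf_smooth hu m j i) m

lemma Qf_smooth (hu : ContDiff ℝ (⊤ : ℕ∞) u) : ContDiff ℝ (⊤ : ℕ∞) (Qf u) :=
  contDiff_const.mul (ContDiff.sum fun i _ => (co_smooth hu i).mul (co_smooth hu i))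
lemma Rf_smooth (hu : ContDiff ℝ (⊤ : ℕ∞) u) : ContDiff ℝ (⊤ : ℕ∞) (Rf u) :=
  contDiff_const.mul (ContDiff.sum fun i _ =>
    ContDiff.sum fun k _ => (Bf_smooth hu k i).mul (Bf_smooth hu k i))
lemma Sf_smooth (hu : ContDiff ℝ (⊤ : ℕ∞) u) (m : Fin 3) : ContDiff ℝ (⊤ : ℕ∞) (Sf u m) :=
  ContDiff.sum fun j _ => ContDiff.sum fun i _ =>
    (co_smooth hu j).mul ((co_smooth hu i).mul (Cf_smooth hu m j i))
lemma Gf_smooth (hu : ContDiff ℝ (⊤ : ℕ∞) u) (m : Fin 3) : ContDiff ℝ (⊤ : ℕ∞) (Gf u α m) :=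
  (((co_smooth hu m).mul (Qf_smooth hu)).add
    (contDiff_const.mul ((co_smooth hu m).mul (Rf_smooth hu)))).sub
    (contDiff_const.mul (Sf_smooth hu m))

lemma co_periodic (hp : IsPeriodic L u) (i : Fin 3) : IsPeriodic L (co u i) := fun x k => congrFun (hp x k) i
lemma Bf_periodic (hu : ContDiff ℝ (⊤ : ℕ∞) u) (hp : IsPeriodic L u) (j i : Fin 3) : IsPeriodic L (Bf u j i) :=
  pd_periodic (co_smooth hu i) (co_periodic hp i) j
lemma Cf_periodic (hu : ContDiff ℝ (⊤ : ℕ∞) u) (hp : IsPeriodic L u) (k j i : Fin 3) : IsPeriodic L (Cf u k j i) :=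
  pd_periodic (Bf_smooth hu j i) (Bf_periodic hu hp j i) k
lemma Gf_periodic (hu : ContDiff ℝ (⊤ : ℕ∞) u) (hp : IsPeriodic L u) (m : Fin 3) : IsPeriodic L (Gf u α m) := by
  intro x k
  unfold Gf Qf Rf Sf
  simp only [co_periodic hp _ x k, Bf_periodic hu hp _ _ x k, Cf_periodic hu hp _ _ _ x k]

end facts

section scal
variable {u : V3 → V3} {α L : ℝ}

lemma s1 (hu : ContDiff ℝ (⊤ : ℕ∞) u) (j i : Fin 3) (x : V3) : pd j u x i = Bf u j i x :=
  (pd_proj ((hu.differentiable (by simp)) x) j i).symm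

lemma s1' (hu : ContDiff ℝ (⊤ : ℕ∞) u) (j i : Fin 3) : (fun y => pd j u y i) = Bf u j i :=
  funext fun y => s1 hu j i y

lemma s2 (hu : ContDiff ℝ (⊤ : ℕ∞) u) (k j i : Fin 3) (x : V3) :
    pd k (pd j u) x i = Cf u k j i x := by
  have hdj : Differentiable ℝ (pd j u) := (contDiff_pd hu j).differentiable (by simp)
  rw [← pd_proj (hdj x) k i, show (fun y => pd j u y i) = Bf u j i from s1' hu j i]
  rfl

lemma s3 (hu : ContDiff ℝ (⊤ : ℕ∞) u) :
    Hop α u = fun y i => co u i y - α ^ 2 * ∑ m, Cf u m m i y := by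
  funext y i
  show u y i - α ^ 2 * lap u y i = _
  congr 1
  congr 1
  show (∑ j, pd j (fun z => pd j u z) y) i = _
  rw [Finset.sum_apply]
  exact Finset.sum_congr rfl fun m _ => s2 hu m m i y

lemma Hop_smooth (hu : ContDiff ℝ (⊤ : ℕ∞) u) : ContDiff ℝ (⊤ : ℕ∞) (Hop α u) := by
  rw [s3 (α := α) hu]
  exact contDiff_pi.2 fun i => (co_smooth hu i).sub
    (contDiff_const.mul (ContDiff.sum fun m _ => Cf_smooth hu m m i))

lemma htriple (hu : ContDiff ℝ (⊤ : ℕ∞) u) (j m i : Fin 3) (x : V3) :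
    pd j (Cf u m m i) x = Ef u m j i x := by
  have h1 : pd j (Cf u m m i) x = pd m (pd j (Bf u m i)) x :=
    pd_comm (Bf_smooth hu m i) j m x
  have h2 : pd j (Bf u m i) = pd m (Bf u j i) :=
    funext fun y => pd_comm (co_smooth hu i) j m y
  rw [h1, h2]
  rfl

lemma s4 (hu : ContDiff ℝ (⊤ : ℕ∞) u) (j i : Fin 3) (x : V3) :
    pd j (Hop α u) x i = Bf u j i x - α ^ 2 * ∑ m, Ef u m j i x := by
  rw [← pd_proj ((Hop_smooth (α := α) hu).differentiable (by simp) x) j i]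
  have hfe : (fun y => Hop α u y i) = fun y => co u i y - α ^ 2 * ∑ m, Cf u m m i y := by
    funext y; exact congrFun (congrFun (s3 (α := α) hu) y) i
  rw [hfe]
  rw [pd_sub ((co_smooth hu i).differentiable (by simp) x)
    ((contDiff_const.mul (ContDiff.sum fun m _ => Cf_smooth hu m m i)).differentiable (by simp) x) j]
  rw [pd_const_mul ((ContDiff.sum fun m _ =>
    Cf_smooth hu m m i).differentiable (by simp) x) (α^2) j]
  rw [pd_finsum (fun m _ => (Cf_smooth hu m m i).differentiable (by simp) x) j]
  rw [Finset.sum_congr rfl fun m _ => htriple hu j m i x]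
  show Bf u j i x - _ = _
  rfl

end scal

section pdg
variable {u : V3 → V3} {α L : ℝ}

lemma pdQ (hu : ContDiff ℝ (⊤ : ℕ∞) u) (m : Fin 3) (x : V3) :
    pd m (Qf u) x = (1/2) * ∑ i, (Bf u m i x * co u i x + co u i x * Bf u m i x) := by
  have hsum : ContDiff ℝ (⊤ : ℕ∞) (fun y => ∑ i, co u i y * co u i y) :=
    ContDiff.sum fun i _ => (co_smooth hu i).mul (co_smooth hu i)
  unfold Qf
  rw [pd_const_mul (hsum.differentiable (by simp) x) _ m,
    pd_finsum (fun i _ => ((co_smooth hu i).mul (co_smooth hu i)).differentiable (by simp) x) m]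
  congr 1
  refine Finset.sum_congr rfl fun i _ => ?_
  rw [pd_mul ((co_smooth hu i).differentiable (by simp) x)
    ((co_smooth hu i).differentiable (by simp) x) m]
  rfl

lemma pdR (hu : ContDiff ℝ (⊤ : ℕ∞) u) (m : Fin 3) (x : V3) :
    pd m (Rf u) x
      = (1/2) * ∑ i, ∑ k, (Cf u m k i x * Bf u k i x + Bf u k i x * Cf u m k i x) := by
  have hin : ∀ i : Fin 3, ContDiff ℝ (⊤ : ℕ∞) (fun y => ∑ k, Bf u k i y * Bf u k i y) := fun i =>
    ContDiff.sum fun k _ => (Bf_smooth hu k i).mul (Bf_smooth hu k i)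
  unfold Rf
  rw [pd_const_mul ((ContDiff.sum fun i _ => hin i).differentiable (by simp) x) _ m,
    pd_finsum (fun i _ => (hin i).differentiable (by simp) x) m]
  congr 1
  refine Finset.sum_congr rfl fun i _ => ?_
  rw [pd_finsum (fun k _ => ((Bf_smooth hu k i).mul (Bf_smooth hu k i)).differentiable (by simp) x) m]
  refine Finset.sum_congr rfl fun k _ => ?_
  rw [pd_mul ((Bf_smooth hu k i).differentiable (by simp) x)
    ((Bf_smooth hu k i).differentiable (by simp) x) m]
  rfl

lemma pdS (hu : ContDiff ℝ (⊤ : ℕ∞) u) (m : Fin 3) (x : V3) :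
    pd m (Sf u m) x
      = ∑ j, ∑ i, (Bf u m j x * (co u i x * Cf u m j i x)
          + co u j x * (Bf u m i x * Cf u m j i x + co u i x * Ef u m j i x)) := by
  have hin : ∀ j : Fin 3, ContDiff ℝ (⊤ : ℕ∞) (fun y => ∑ i, co u j y * (co u i y * Cf u m j i y)) :=
    fun j => ContDiff.sum fun i _ =>
      (co_smooth hu j).mul ((co_smooth hu i).mul (Cf_smooth hu m j i))
  unfold Sf
  rw [pd_finsum (fun j _ => (hin j).differentiable (by simp) x) m]
  refine Finset.sum_congr rfl fun j _ => ?_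
  rw [pd_finsum (fun i _ => (((co_smooth hu j).mul
    ((co_smooth hu i).mul (Cf_smooth hu m j i)))).differentiable (by simp) x) m]
  refine Finset.sum_congr rfl fun i _ => ?_
  rw [pd_mul ((co_smooth hu j).differentiable (by simp) x)
    (((co_smooth hu i).mul (Cf_smooth hu m j i)).differentiable (by simp) x) m,
    pd_mul ((co_smooth hu i).differentiable (by simp) x)
    ((Cf_smooth hu m j i).differentiable (by simp) x) m]
  rfl

lemma pdG (hu : ContDiff ℝ (⊤ : ℕ∞) u) (m : Fin 3) (x : V3) :
    pd m (Gf u α m) x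
      = ((Bf u m m x * ((1/2) * ∑ i, co u i x * co u i x)
          + co u m x * ((1/2) * ∑ i, (Bf u m i x * co u i x + co u i x * Bf u m i x)))
        + α ^ 2 * (Bf u m m x * ((1/2) * ∑ i, ∑ k, Bf u k i x * Bf u k i x)
          + co u m x * ((1/2) * ∑ i, ∑ k,
              (Cf u m k i x * Bf u k i x + Bf u k i x * Cf u m k i x)))
        - α ^ 2 * ∑ j, ∑ i, (Bf u m j x * (co u i x * Cf u m j i x)
          + co u j x * (Bf u m i x * Cf u m j i x + co u i x * Ef u m j i x))) := by
  have d1 : DifferentiableAt ℝ (fun y => co u m y * Qf u y) x :=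
    ((co_smooth hu m).mul (Qf_smooth hu)).differentiable (by simp) x
  have d2 : DifferentiableAt ℝ (fun y => α ^ 2 * (co u m y * Rf u y)) x :=
    (contDiff_const.mul ((co_smooth hu m).mul (Rf_smooth hu))).differentiable (by simp) x
  have d3 : DifferentiableAt ℝ (fun y => α ^ 2 * Sf u m y) x :=
    (contDiff_const.mul (Sf_smooth hu m)).differentiable (by simp) x
  unfold Gf
  rw [pd_sub (f := fun y => co u m y * Qf u y + α ^ 2 * (co u m y * Rf u y))
      (g := fun y => α ^ 2 * Sf u m y) (d1.add d2) d3 m,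
    pd_add d1 d2 m,
    pd_mul ((co_smooth hu m).differentiable (by simp) x)
      ((Qf_smooth hu).differentiable (by simp) x) m,
    pd_const_mul (((co_smooth hu m).mul (Rf_smooth hu)).differentiable (by simp) x) _ m,
    pd_mul ((co_smooth hu m).differentiable (by simp) x)
      ((Rf_smooth hu).differentiable (by simp) x) m,
    pd_const_mul ((Sf_smooth hu m).differentiable (by simp) x) _ m,
    pdQ hu m x, pdR hu m x, pdS hu m x]
  show _ * Qf u x + _ + α ^ 2 * (_ * Rf u x + _) - _ = _
  unfold Qf Rf
  rfl

end pdg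


/-- main theorem -/
theorem clark_trilinear_uvu (L α : ℝ) (hL : 0 < L) (hα : 0 < α) (u : V3 → V3)
    (hu : ContDiff ℝ (⊤ : ℕ∞) u) (hp : IsPeriodic L u) (hdiv : DivFree u) :
    (∫ x in box L, ∑ i, advect u (Hop α u) x i * u x i)
      - α ^ 2 * ∑ j : Fin 3,
          (∫ x in box L, ∑ i, advect (pd j u) (pd j u) x i * u x i) = 0 := by
  have hbox : IsCompact (box L) := by unfold box; exact isCompact_Icc
  -- scalarized integrands
  have hI1 : (fun x => ∑ i, advect u (Hop α u) x i * u x i)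
      = fun x => ∑ i, (∑ j, co u j x
          * (Bf u j i x - α ^ 2 * ∑ m, Ef u m j i x)) * co u i x := by
    funext x
    refine Finset.sum_congr rfl fun i _ => ?_
    show (∑ j, u x j * pd j (Hop α u) x i) * u x i = _
    congr 1
    refine Finset.sum_congr rfl fun j _ => ?_
    rw [s4 hu j i x]
    rfl
  have hI2 : ∀ j : Fin 3, (fun x => ∑ i, advect (pd j u) (pd j u) x i * u x i)
      = fun x => ∑ i, (∑ k, Bf u j k x * Cf u k j i x) * co u i x := by
    intro j
    funext x
    refine Finset.sum_congr rfl fun i _ => ?_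
    show (∑ k, pd j u x k * pd k (pd j u) x i) * u x i = _
    congr 1
    refine Finset.sum_congr rfl fun k _ => ?_
    rw [s1 hu j k x, s2 hu k j i x]
  -- integrability
  have int1 : IntegrableOn (fun x => ∑ i, (∑ j, co u j x
      * (Bf u j i x - α ^ 2 * ∑ m, Ef u m j i x)) * co u i x) (box L) := by
    refine (Continuous.continuousOn ?_).integrableOn_compact hbox
    refine continuous_finset_sum _ fun i _ => Continuous.mul ?_ (co_smooth hu i).continuous
    refine continuous_finset_sum _ fun j _ => Continuous.mul (co_smooth hu j).continuous ?_
    exact (Bf_smooth hu j i).continuous.sub (continuous_const.mul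
      (continuous_finset_sum _ fun m _ => (Ef_smooth hu m j i).continuous))
  have int2 : ∀ j : Fin 3, IntegrableOn
      (fun x => ∑ i, (∑ k, Bf u j k x * Cf u k j i x) * co u i x) (box L) := by
    intro j
    refine (Continuous.continuousOn ?_).integrableOn_compact hbox
    refine continuous_finset_sum _ fun i _ => Continuous.mul ?_ (co_smooth hu i).continuous
    exact continuous_finset_sum _ fun k _ =>
      (Bf_smooth hu j k).continuous.mul (Cf_smooth hu k j i).continuous
  have intG : ∀ m : Fin 3, IntegrableOn (fun x => pd m (Gf u α m) x) (box L) := fun m =>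
    ((contDiff_pd (Gf_smooth hu m) m).continuous.continuousOn).integrableOn_compact hbox
  have hzero : ∀ m : Fin 3, ∫ x in box L, pd m (Gf u α m) x = 0 := fun m =>
    integral_pd_zero hL (Gf_smooth hu m) (Gf_periodic hu hp m) m
  -- pointwise identity
  have hpt : ∀ x : V3, (∑ i, (∑ j, co u j x
        * (Bf u j i x - α ^ 2 * ∑ m, Ef u m j i x)) * co u i x)
      - α ^ 2 * ∑ j, ∑ i, (∑ k, Bf u j k x * Cf u k j i x) * co u i x
      = ∑ m, pd m (Gf u α m) x := by
    intro x
    have hb : Bf u 0 0 x + Bf u 1 1 x + Bf u 2 2 x = 0 := by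
      have := hdiv x
      rw [Finset.sum_congr rfl fun i _ => s1 hu i i x, Fin.sum_univ_three] at this
      exact this
    simp only [pdG hu]
    exact key_alg α (fun i => co u i x) (fun j i => Bf u j i x)
      (fun k j i => Cf u k j i x) (fun m j i => Ef u m j i x) hb
      (fun i => pd_comm (co_smooth hu i) 1 0 x)
      (fun i => pd_comm (co_smooth hu i) 2 0 x)
      (fun i => pd_comm (co_smooth hu i) 2 1 x)
  -- combine
  have intall : IntegrableOn (fun x => α ^ 2 * ∑ j : Fin 3,
      ∑ i, (∑ k, Bf u j k x * Cf u k j i x) * co u i x) (box L) :=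
    (integrable_finset_sum _ fun j _ => int2 j).const_mul _
  have step1 : ∫ x in box L, ((∑ i, (∑ j, co u j x
        * (Bf u j i x - α ^ 2 * ∑ m, Ef u m j i x)) * co u i x)
      - α ^ 2 * ∑ j : Fin 3, ∑ i, (∑ k, Bf u j k x * Cf u k j i x) * co u i x)
      = (∫ x in box L, ∑ i, (∑ j, co u j x
        * (Bf u j i x - α ^ 2 * ∑ m, Ef u m j i x)) * co u i x)
      - α ^ 2 * ∑ j : Fin 3, ∫ x in box L,
          ∑ i, (∑ k, Bf u j k x * Cf u k j i x) * co u i x := by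
    rw [integral_sub int1 intall, integral_const_mul,
      integral_finset_sum _ (fun j _ => int2 j)]
  have step2 : ∫ x in box L, ((∑ i, (∑ j, co u j x
        * (Bf u j i x - α ^ 2 * ∑ m, Ef u m j i x)) * co u i x)
      - α ^ 2 * ∑ j : Fin 3, ∑ i, (∑ k, Bf u j k x * Cf u k j i x) * co u i x) = 0 := by
    simp only [hpt]
    rw [integral_finset_sum _ (fun m _ => intG m)]
    simp [hzero]
  rw [hI1]
  simp only [hI2]
  rw [← step1, step2]
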